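/- arXiv:2411.07255 — 10 statements merged into one kernel-verified Lean document; each statement's English description precedes it below -/
import Mathlib

section
/- Let a, d > 0, c, m ∈ ℝ with m > c, and set b = a, u₁₁ = (m-c)/(1+d), v₁₁ = 1/(a + m·u₁₁ - u₁₁²). Then the determinant of the Jacobian J(E₁₁) = [[u₁₁v₁₁(m-2u₁₁), u₁₁/v₁₁], [-(c+2du₁₁)v₁₁, -1/v₁₁]] equals (m-c)²/(1+d), which is positive. -/
theorem detJ_E11
    (a c d m : ℝ) (ha : 0 < a) (hd : 0 < d) (hmc : c < m)
    (u₁₁ v₁₁ : ℝ)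
    (hu : u₁₁ = (m - c) / (1 + d))
    (hpos : 0 < a + m * u₁₁ - u₁₁ ^ 2)
    (hv : v₁₁ = 1 / (a + m * u₁₁ - u₁₁ ^ 2)) :
    (Matrix.of ![![u₁₁ * v₁₁ * (m - 2 * u₁₁), u₁₁ / v₁₁],
                 ![-(c + 2 * d * u₁₁) * v₁₁, -1 / v₁₁]]).det = (m - c) ^ 2 / (1 + d) ∧
    0 < (m - c) ^ 2 / (1 + d) := by
  have hd1 : (1 : ℝ) + d ≠ 0 := by positivity
  have hvne : v₁₁ ≠ 0 := by
    rw [hv]; exact one_div_ne_zero (ne_of_gt hpos)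
  constructor
  · rw [Matrix.det_fin_two_of, hu]
    field_simp
    ring
  · have hmc2 : (0:ℝ) < m - c := sub_pos.mpr hmc
    positivity
end

section
/- Let a, d > 0, c, m ∈ ℝ with m > c and the existence conditions for the saddle equilibrium E₁₂ (namely a < b < a + (c-m)²/(4(1+d))). With u₁₂ = (m-c-√Δ)/(2(1+d)) and Δ = (c-m)² - 4(1+d)(b-a) > 0, the determinant of the Jacobian at E₁₂, which equals 2(1+d)u₁₂(u₁₂ - (m-c)/(2(1+d))), simplifies to -u₁₂√Δ and is negative; hence E₁₂ is a hyperbolic saddle. -/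
theorem E12_saddle
    (a b c d m : ℝ) (ha : 0 < a) (hb : 0 < b) (hd : 0 < d)
    (hmc : c < m) (hab : a < b) (hb2 : b < a + (c - m) ^ 2 / (4 * (1 + d)))
    (Δ u₁₂ : ℝ)
    (hΔ : Δ = (c - m) ^ 2 - 4 * (1 + d) * (b - a))
    (hu : u₁₂ = (m - c - Real.sqrt Δ) / (2 * (1 + d))) :
    0 < Δ ∧
    2 * (1 + d) * u₁₂ * (u₁₂ - (m - c) / (2 * (1 + d))) = -u₁₂ * Real.sqrt Δ ∧
    2 * (1 + d) * u₁₂ * (u₁₂ - (m - c) / (2 * (1 + d))) < 0 := by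
  have h1d : (0:ℝ) < 1 + d := by linarith
  have hΔpos : 0 < Δ := by
    have h4 : (0:ℝ) < 4 * (1 + d) := by linarith
    have h5 : b - a < (c - m) ^ 2 / (4 * (1 + d)) := by linarith
    have h6 := (lt_div_iff₀ h4).mp h5
    rw [hΔ]; nlinarith
  have hsq : Real.sqrt Δ ^ 2 = Δ := Real.sq_sqrt hΔpos.le
  have hslt : Real.sqrt Δ < m - c := by
    have h1 : Δ < (m - c) ^ 2 := by nlinarith
    have := Real.sqrt_lt_sqrt hΔpos.le h1
    rwa [Real.sqrt_sq (by linarith : (0:ℝ) ≤ m - c)] at this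
  have hspos : 0 < Real.sqrt Δ := Real.sqrt_pos.mpr hΔpos
  have hu2 : 2 * (1 + d) * u₁₂ = m - c - Real.sqrt Δ := by
    rw [hu]; field_simp
  have hupos : 0 < u₁₂ := by
    rw [hu]; exact div_pos (by linarith) (by linarith)
  have heq : 2 * (1 + d) * u₁₂ * (u₁₂ - (m - c) / (2 * (1 + d))) = -u₁₂ * Real.sqrt Δ := by
    have h2 : (2 * (1 + d)) ≠ 0 := by positivity
    field_simp
    nlinarith [hu2]
  refine ⟨hΔpos, heq, ?_⟩
  rw [heq]
  nlinarith [mul_pos hupos hspos]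
end

section
/- Let d > 0 and c, m ∈ ℝ with m > c, m(d-1) + 2c < 0, A = -(1+d)⁴, B = 2(1+d)²(c-m)(c+md), C = (m-c)·g(d) with g(d) = md³ + (cm²-m³+2c+m)d² + (2mc²-2cm²+4c-m)d + c³-mc²+2c-m. Then for every real a, Aa² + Ba + C < 0. -/
theorem quadratic_negative_definite_g
    (c d m : ℝ) (hd : 0 < d) (hmc : c < m)
    (hcond : m * (d - 1) + 2 * c < 0)
    (A B C g : ℝ)
    (hg : g = m * d ^ 3 + (c * m ^ 2 - m ^ 3 + 2 * c + m) * d ^ 2 +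
        (2 * m * c ^ 2 - 2 * c * m ^ 2 + 4 * c - m) * d + c ^ 3 - m * c ^ 2 + 2 * c - m)
    (hA : A = -(1 + d) ^ 4)
    (hB : B = 2 * (1 + d) ^ 2 * (c - m) * (c + m * d))
    (hC : C = (m - c) * g) :
    ∀ a : ℝ, A * a ^ 2 + B * a + C < 0 := by
  intro a
  have hdisc : B ^ 2 - 4 * A * C = 4 * (m - c) * (m * d + 2 * c - m) * (1 + d) ^ 6 := by
    subst hg hA hB hC; ring
  have h1 : (0:ℝ) < m - c := by linarith
  have h2 : m * d + 2 * c - m < 0 := by linarith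
  have h3 : (0:ℝ) < (1 + d) ^ 6 := by positivity
  have hdneg : B ^ 2 - 4 * A * C < 0 := by
    rw [hdisc]
    have := mul_pos h1 h3
    nlinarith
  have hAneg : A < 0 := by rw [hA]; nlinarith [pow_pos (by linarith : (0:ℝ) < 1 + d) 4]
  nlinarith [sq_nonneg (2 * A * a + B), sq_nonneg a]
end

section
/- Let d > 0, c, m ∈ ℝ with m > c, m(d-1)+2c > 0, and g(d) > 0, where g(d) = md³ + (cm²-m³+2c+m)d² + (2mc²-2cm²+4c-m)d + c³-mc²+2c-m. Then the equation -(1+d)⁴a² + 2(1+d)²(c-m)(c+md)a + (m-c)g(d) = 0 has a positive root a* = ((c-m)(md+c) + (1+d)√((m-c)(md+2c-m)))/(1+d)², and for a > a* the quadratic is negative, while for 0 < a < a* it is positive. -/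
/-!
Writing `p = (1 + d)²`, `k = (c - m)(c + m d)` and `r = (1 + d) √((m - c)(m d + 2c - m))`, the
polynomial `g` is built so that `r² = k² + (m - c) g`. Hence the quadratic equals
`-p²a² + 2pka + (r² - k²) = (k + r - p a)(p a - (k - r))`, and `(m - c) g > 0` forces `|k| < r`,
so its roots `(k ± r) / p` have opposite signs and `a* = (k + r) / p` is the positive one.
-/

section NegQuadratic

variable {p k e r : ℝ}

theorem neg_quadratic_eq_mul (hdisc : r ^ 2 = k ^ 2 + e) (a : ℝ) :
    -p ^ 2 * a ^ 2 + 2 * p * k * a + e = (k + r - p * a) * (p * a - (k - r)) := by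
  linear_combination -hdisc

theorem abs_lt_of_sq_eq_sq_add (he : 0 < e) (hr : 0 ≤ r) (hdisc : r ^ 2 = k ^ 2 + e) :
    |k| < r :=
  abs_lt_of_sq_lt_sq (by linarith) hr

theorem neg_quadratic_sign (hp : 0 < p) (he : 0 < e) (hr : 0 ≤ r)
    (hdisc : r ^ 2 = k ^ 2 + e) :
    0 < (k + r) / p ∧
    -p ^ 2 * ((k + r) / p) ^ 2 + 2 * p * k * ((k + r) / p) + e = 0 ∧
    (∀ a : ℝ, (k + r) / p < a → -p ^ 2 * a ^ 2 + 2 * p * k * a + e < 0) ∧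
    (∀ a : ℝ, 0 < a → a < (k + r) / p → 0 < -p ^ 2 * a ^ 2 + 2 * p * k * a + e) := by
  obtain ⟨hkr, hrk⟩ := abs_lt.1 (abs_lt_of_sq_eq_sq_add he hr hdisc)
  simp only [neg_quadratic_eq_mul hdisc, lt_div_iff₀ hp, div_lt_iff₀ hp]
  refine ⟨by linarith, by field_simp; ring, fun a ha => ?_, fun a ha₀ ha => ?_⟩
  · exact mul_neg_of_neg_of_pos (by linarith) (by nlinarith)
  · exact mul_pos (by linarith) (by nlinarith)

end NegQuadratic

theorem hopf_threshold
    (c d m : ℝ) (hd : 0 < d) (hmc : c < m)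
    (hcond : 0 < m * (d - 1) + 2 * c)
    (g : ℝ)
    (hg : g = m * d ^ 3 + (c * m ^ 2 - m ^ 3 + 2 * c + m) * d ^ 2 +
        (2 * m * c ^ 2 - 2 * c * m ^ 2 + 4 * c - m) * d + c ^ 3 - m * c ^ 2 + 2 * c - m)
    (hgpos : 0 < g)
    (astar : ℝ)
    (hastar : astar = ((c - m) * (m * d + c) +
        (1 + d) * Real.sqrt ((m - c) * (m * d + 2 * c - m))) / (1 + d) ^ 2) :
    0 < astar ∧
    -(1 + d) ^ 4 * astar ^ 2 + 2 * (1 + d) ^ 2 * (c - m) * (c + m * d) * astar + (m - c) * g = 0 ∧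
    (∀ a : ℝ, astar < a →
      -(1 + d) ^ 4 * a ^ 2 + 2 * (1 + d) ^ 2 * (c - m) * (c + m * d) * a + (m - c) * g < 0) ∧
    (∀ a : ℝ, 0 < a → a < astar →
      0 < -(1 + d) ^ 4 * a ^ 2 + 2 * (1 + d) ^ 2 * (c - m) * (c + m * d) * a + (m - c) * g) := by
  set s := Real.sqrt ((m - c) * (m * d + 2 * c - m))
  have hs : s ^ 2 = (m - c) * (m * d + 2 * c - m) :=
    Real.sq_sqrt (mul_pos (sub_pos.2 hmc) (by linarith)).le
  have hdisc : ((1 + d) * s) ^ 2 = ((c - m) * (c + m * d)) ^ 2 + (m - c) * g := by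
    rw [mul_pow, hs, hg]; ring
  have hastar' : astar = ((c - m) * (c + m * d) + (1 + d) * s) / (1 + d) ^ 2 := by
    rw [hastar]; ring
  have key := neg_quadratic_sign (p := (1 + d) ^ 2) (by positivity)
    (mul_pos (sub_pos.2 hmc) hgpos) (mul_nonneg (by linarith) (Real.sqrt_nonneg _)) hdisc
  rw [← hastar'] at key
  have hp : (1 + d) ^ 4 = ((1 + d) ^ 2) ^ 2 := by ring
  simpa only [hp, mul_assoc] using key
end

section
/- Let d > 0, c, m ∈ ℝ with m > c and c + md < 0. Then for all real a, -16(1+d)⁴a² + 8(1+d)²(c-m)(c+m+2md)a + (m-c)h(d) < 0, where h(d) = 8md³ + 4(cm²-m³+2c+4m)d² + 4(mc²-m³+4c+2m)d + c³+mc²-cm²-m³+8c is as in the E₁₃ analysis. -/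
theorem quadratic_negative_definite_h
    (c d m : ℝ) (hd : 0 < d) (hmc : c < m)
    (hcond : c + m * d < 0)
    (h : ℝ)
    (hh : h = 8 * m * d ^ 3 + 4 * (c * m ^ 2 - m ^ 3 + 2 * c + 4 * m) * d ^ 2 +
        4 * (m * c ^ 2 - m ^ 3 + 4 * c + 2 * m) * d +
        c ^ 3 + m * c ^ 2 - c * m ^ 2 - m ^ 3 + 8 * c) :
    ∀ a : ℝ, -16 * (1 + d) ^ 4 * a ^ 2 +
        8 * (1 + d) ^ 2 * (c - m) * (c + m + 2 * m * d) * a + (m - c) * h < 0 := by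
  intro a
  subst hh
  have h1 : (0:ℝ) < 1 + d := by linarith
  have h2 : (0:ℝ) < (1 + d) ^ 6 := by positivity
  have h3 : 0 < (m - c) * (-(m * d + c)) := by nlinarith
  nlinarith [sq_nonneg (2 * (-16 * (1 + d) ^ 4) * a + 8 * (1 + d) ^ 2 * (c - m) * (c + m + 2 * m * d)), mul_pos h3 h2, sq_nonneg ((1+d)^2 * a), pow_pos h1 4]
end

section
/- Let m ≤ 0. Then for all u, v > 0, the divergence of the vector field (Υ₁X₁, Υ₂X₁) is negative, where Υ₁(u,v) = (av-1)u + mu²v - u³v, Υ₂(u,v) = 1 - (b+cu+du²)v, and X₁(u,v) = 1/(uv); explicitly, ∂ᵤ(Υ₁X₁) + ∂ᵥ(Υ₂X₁) = m - 2u - 1/(uv²) < 0. -/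
/-!
Away from the axes the products simplify: `Υ₁ X₁ = (a v - 1)/v + m u - u²` and
`Υ₂ X₁ = 1/(u v) - (b + c u + d u²)/u`. Differentiating gives the divergence
`m - 2u - 1/(u v²)`, each term of which is nonpositive on the open quadrant, the last one strictly.
-/

open Filter

lemma hasDerivAt_upsilon1_mul_X1 (a m v u : ℝ) (hu : u ≠ 0) (hv : v ≠ 0) :
    HasDerivAt (fun u' => ((a * v - 1) * u' + m * u' ^ 2 * v - u' ^ 3 * v) * (1 / (u' * v)))
      (m - 2 * u) u := by
  have hsimp : (fun u' => (a * v - 1) / v + (m * u' - u' ^ 2)) =ᶠ[nhds u]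
      fun u' => ((a * v - 1) * u' + m * u' ^ 2 * v - u' ^ 3 * v) * (1 / (u' * v)) := by
    filter_upwards [eventually_ne_nhds hu] with x hx
    field_simp
    ring
  have hpoly : HasDerivAt (fun u' => (a * v - 1) / v + (m * u' - u' ^ 2)) (m - 2 * u) u := by
    simpa using (((hasDerivAt_id u).const_mul m).sub (hasDerivAt_pow 2 u)).const_add
      ((a * v - 1) / v)
  exact hpoly.congr_of_eventuallyEq hsimp.symm

lemma hasDerivAt_upsilon2_mul_X1 (k u v : ℝ) (hu : u ≠ 0) (hv : v ≠ 0) :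
    HasDerivAt (fun v' => (1 - k * v') * (1 / (u * v'))) (-(1 / (u * v ^ 2))) v := by
  have hsimp : (fun v' => 1 / u * v'⁻¹ - k / u) =ᶠ[nhds v]
      fun v' => (1 - k * v') * (1 / (u * v')) := by
    filter_upwards [eventually_ne_nhds hv] with x hx
    field_simp
  have hinv : HasDerivAt (fun v' => 1 / u * v'⁻¹ - k / u) (-(1 / (u * v ^ 2))) v := by
    refine (((hasDerivAt_inv hv).const_mul (1 / u)).sub_const (k / u)).congr_deriv ?_
    field_simp
  exact hinv.congr_of_eventuallyEq hsimp.symm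

theorem dulac_X1
    (a b c d m : ℝ) (hm : m ≤ 0) :
    ∀ u v : ℝ, 0 < u → 0 < v →
      (deriv (fun u' => ((a * v - 1) * u' + m * u' ^ 2 * v - u' ^ 3 * v) * (1 / (u' * v))) u +
       deriv (fun v' => (1 - (b + c * u + d * u ^ 2) * v') * (1 / (u * v'))) v =
        m - 2 * u - 1 / (u * v ^ 2)) ∧
      m - 2 * u - 1 / (u * v ^ 2) < 0 := by
  intro u v hu hv
  refine ⟨?_, ?_⟩
  · rw [(hasDerivAt_upsilon1_mul_X1 a m v u hu.ne' hv.ne').deriv,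
      (hasDerivAt_upsilon2_mul_X1 (b + c * u + d * u ^ 2) u v hu.ne' hv.ne').deriv]
    ring
  · have hX1 : 0 < 1 / (u * v ^ 2) := by positivity
    linarith
end

section
/- Let a ≥ 1/4. Then for all u, v > 0, ∂ᵤ(Υ₁X₂) + ∂ᵥ(Υ₂X₂) = (-av² + v - 1)/(u²v²) - 1 < 0, where Υ₁(u,v) = (av-1)u + mu²v - u³v, Υ₂(u,v) = 1 - (b+cu+du²)v, and X₂(u,v) = 1/(u²v). -/
theorem hasDerivAt_Υ₁_mul_X₂ {p m v u : ℝ} (hv : v ≠ 0) (hu : u ≠ 0) :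
    HasDerivAt (fun u' => (p * u' + m * u' ^ 2 * v - u' ^ 3 * v) * (1 / (u' ^ 2 * v)))
      (-p / (u ^ 2 * v) - 1) u := by
  have hΥ₁ : HasDerivAt (fun u' => p * u' + m * u' ^ 2 * v - u' ^ 3 * v)
      (p + m * (2 * u) * v - 3 * u ^ 2 * v) u := by
    refine ((((hasDerivAt_id u).const_mul p).add
      (((hasDerivAt_pow 2 u).const_mul m).mul_const v)).sub
      ((hasDerivAt_pow 3 u).mul_const v)).congr_deriv ?_
    norm_num
  have hX₂ : HasDerivAt (fun u' => 1 / (u' ^ 2 * v)) (-(2 * u * v) / (u ^ 2 * v) ^ 2) u := by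
    have hsq : HasDerivAt (fun u' => u' ^ 2 * v) (2 * u * v) u := by
      simpa using (hasDerivAt_pow 2 u).mul_const v
    simp only [one_div]
    exact hsq.inv (by positivity)
  refine (hΥ₁.mul hX₂).congr_deriv ?_
  field_simp
  ring

theorem hasDerivAt_Υ₂_mul_X₂ {k q v : ℝ} (hq : q ≠ 0) (hv : v ≠ 0) :
    HasDerivAt (fun v' => (1 - k * v') * (1 / (q * v'))) (-1 / (q * v ^ 2)) v := by
  have hΥ₂ : HasDerivAt (fun v' => 1 - k * v') (-k) v := by
    simpa using ((hasDerivAt_id v).const_mul k).const_sub 1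
  have hX₂ : HasDerivAt (fun v' => 1 / (q * v')) (-q / (q * v) ^ 2) v := by
    have hlin : HasDerivAt (fun v' => q * v') q v := by
      simpa using (hasDerivAt_id v).const_mul q
    simp only [one_div]
    exact hlin.inv (mul_ne_zero hq hv)
  refine (hΥ₂.mul hX₂).congr_deriv ?_
  field_simp
  ring

theorem neg_mul_sq_add_sub_one_nonpos {a : ℝ} (ha : 1 / 4 ≤ a) (v : ℝ) :
    -a * v ^ 2 + v - 1 ≤ 0 := by
  -- `-a v² + v - 1 = -(a - 1/4) v² - (v/2 - 1)²`
  linarith [mul_nonneg (sub_nonneg.2 ha) (sq_nonneg v), sq_nonneg (v / 2 - 1)]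

theorem dulac_X2
    (a b c d m : ℝ) (ha : 1 / 4 ≤ a) :
    ∀ u v : ℝ, 0 < u → 0 < v →
      (deriv (fun u' => ((a * v - 1) * u' + m * u' ^ 2 * v - u' ^ 3 * v) * (1 / (u' ^ 2 * v))) u +
       deriv (fun v' => (1 - (b + c * u + d * u ^ 2) * v') * (1 / (u ^ 2 * v'))) v =
        (-a * v ^ 2 + v - 1) / (u ^ 2 * v ^ 2) - 1) ∧
      (-a * v ^ 2 + v - 1) / (u ^ 2 * v ^ 2) - 1 < 0 := by
  intro u v hu hv
  refine ⟨?_, ?_⟩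
  · rw [(hasDerivAt_Υ₁_mul_X₂ hv.ne' hu.ne').deriv,
      (hasDerivAt_Υ₂_mul_X₂ (pow_ne_zero 2 hu.ne') hv.ne').deriv]
    field_simp
    ring
  · have hfrac : (-a * v ^ 2 + v - 1) / (u ^ 2 * v ^ 2) ≤ 0 :=
      div_nonpos_of_nonpos_of_nonneg (neg_mul_sq_add_sub_one_nonpos ha v) (by positivity)
    linarith
end

section
/- Let a, b, m > 0, c ≥ 0, d > 0 and set K = (m + √(m² + 4a))/2. Then the rectangle Ω = {(u,v) : 0 ≤ u ≤ K, 0 ≤ v ≤ 1/b} is positively invariant for the system du/dt = (av-1)u + mu²v - u³v, dv/dt = 1 - (b+cu+du²)v; concretely: (i) dv/dt = 1 > 0 on {v = 0}; (ii) du/dt = 0 on {u = 0}; (iii) dv/dt ≤ 0 on {v = 1/b, 0 ≤ u ≤ K}; (iv) du/dt ≤ 0 on {u = K, 0 ≤ v ≤ 1/b}. -/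
theorem invariant_rectangle
    (a b c d m : ℝ) (ha : 0 < a) (hb : 0 < b) (hm : 0 < m) (hc : 0 ≤ c) (hd : 0 < d)
    (K : ℝ) (hK : K = (m + Real.sqrt (m ^ 2 + 4 * a)) / 2) :
    (∀ u : ℝ, 0 ≤ u → u ≤ K → (0 : ℝ) < 1 - (b + c * u + d * u ^ 2) * 0) ∧
    (∀ v : ℝ, 0 ≤ v → v ≤ 1 / b →
      (a * v - 1) * 0 + m * 0 ^ 2 * v - 0 ^ 3 * v = 0) ∧
    (∀ u : ℝ, 0 ≤ u → u ≤ K → 1 - (b + c * u + d * u ^ 2) * (1 / b) ≤ 0) ∧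
    (∀ v : ℝ, 0 ≤ v → v ≤ 1 / b →
      (a * v - 1) * K + m * K ^ 2 * v - K ^ 3 * v ≤ 0) := by
  have hs : 0 ≤ Real.sqrt (m ^ 2 + 4 * a) := Real.sqrt_nonneg _
  have hsq : Real.sqrt (m ^ 2 + 4 * a) ^ 2 = m ^ 2 + 4 * a := by
    rw [Real.sq_sqrt]; positivity
  have hKpos : 0 < K := by rw [hK]; positivity
  have h2 : 2 * K - m = Real.sqrt (m ^ 2 + 4 * a) := by rw [hK]; ring
  have hsq' : (2 * K - m) ^ 2 = m ^ 2 + 4 * a := by rw [h2]; exact hsq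
  have hK2 : K ^ 2 = m * K + a := by linear_combination hsq' / 4
  refine ⟨fun u hu huK => by norm_num, fun v hv hvb => by ring, ?_, ?_⟩
  · intro u hu huK
    have heq : 1 - (b + c * u + d * u ^ 2) * (1 / b) = -(c * u + d * u ^ 2) / b := by
      field_simp; ring
    rw [heq]
    apply div_nonpos_of_nonpos_of_nonneg _ hb.le
    nlinarith [mul_nonneg hc hu, mul_nonneg hd.le (sq_nonneg u)]
  · intro v hv hvb
    have key : (a * v - 1) * K + m * K ^ 2 * v - K ^ 3 * v = -K := by
      linear_combination (-v * K) * hK2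
    rw [key]; linarith
end

section
/- Let a > 0, m > 0 and b > 0 with b² ≥ m(m + √(m²+4a))/2. Then for all (u,v) with 0 < u ≤ (m+√(m²+4a))/2 and 0 < v ≤ 1/b, one has m - 2u - 1/(uv²) < 0. -/
theorem dulac_estimate_in_rectangle
    (a b m : ℝ) (ha : 0 < a) (hm : 0 < m) (hb : 0 < b)
    (hb2 : m * (m + Real.sqrt (m ^ 2 + 4 * a)) / 2 ≤ b ^ 2) :
    ∀ u v : ℝ, 0 < u → u ≤ (m + Real.sqrt (m ^ 2 + 4 * a)) / 2 →
      0 < v → v ≤ 1 / b →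
      m - 2 * u - 1 / (u * v ^ 2) < 0 := by
  intro u v hu huM hv hvb
  set s := Real.sqrt (m ^ 2 + 4 * a) with hs
  have hs0 : 0 ≤ s := Real.sqrt_nonneg _
  have huv : 0 < u * v ^ 2 := by positivity
  have hvb' : v * b ≤ 1 := by
    rw [div_eq_mul_inv, one_mul] at hvb
    calc v * b ≤ b⁻¹ * b := by nlinarith
    _ = 1 := by field_simp
  have hbv2 : v ^ 2 * b ^ 2 ≤ 1 := by nlinarith [mul_pos hv hb]
  have hmu : m * u ≤ b ^ 2 := by nlinarith
  have hkey : m * (u * v ^ 2) ≤ 1 := by nlinarith [sq_nonneg v, mul_pos hu (mul_pos hv hv)]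
  have hm1 : m ≤ 1 / (u * v ^ 2) := by
    rw [le_div_iff₀ huv]
    linarith
  nlinarith
end

section
/- Let r₁₁ > 0, r₂₂ < 0, r₁₂ > 0, r₂₁ < 0 with D := r₁₁r₂₂ - r₁₂r₂₁ > 0, and let d₂ > 0. Define f(y) = (d₂r₁₁y - D)/(y(d₂y - r₂₂)) for y > 0. Then f attains its maximum on (0,∞) at y* = (D + √(-r₁₂r₂₁·D))/(d₂r₁₁); indeed f'(y) = (-r₁₁d₂²y² + 2d₂Dy - r₂₂D)/(y²(d₂y - r₂₂)²) vanishes at y = y*, is positive for 0 < y < y*, and negative for y > y*. -/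
/-!
The numerator of `f'` is a concave quadratic taking the value `-r₂₂ D > 0` at `0`, so it has
exactly one positive root. With `s = √(-r₁₂ r₂₁ D) = √(D² - r₁₁ r₂₂ D)`, which exceeds `D`, it
factors as `d₂ (y* - y) (d₂ r₁₁ y - D + s)`, and the second factor is positive for `y > 0`. Hence
`f` increases on `(0, y*]` and decreases on `[y*, ∞)`.
-/

open Set

theorem hasDerivAt_linear_div_quadratic (a b c D : ℝ) {y : ℝ} (hy : y ≠ 0) (hby : b * y - c ≠ 0) :
    HasDerivAt (fun y => (b * a * y - D) / (y * (b * y - c)))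
      ((-a * b ^ 2 * y ^ 2 + 2 * b * D * y - c * D) / (y ^ 2 * (b * y - c) ^ 2)) y := by
  have hnum : HasDerivAt (fun y => b * a * y - D) (b * a) y := by
    simpa using ((hasDerivAt_id y).const_mul (b * a)).sub_const D
  have hden : HasDerivAt (fun y => y * (b * y - c)) (2 * b * y - c) y := by
    have := (hasDerivAt_id' y).mul (((hasDerivAt_id' y).const_mul b).sub_const c)
    exact this.congr_deriv (by ring)
  exact (hnum.div hden (mul_ne_zero hy hby)).congr_deriv (by field_simp; ring)

theorem neg_mul_sq_add_mul_sub_eq_mul_sub_mul {a b c D s : ℝ} (ha : a ≠ 0) (hb : b ≠ 0)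
    (hs : s ^ 2 = D ^ 2 - a * c * D) (y : ℝ) :
    -a * b ^ 2 * y ^ 2 + 2 * b * D * y - c * D =
      b * ((D + s) / (b * a) - y) * (a * b * y - D + s) := by
  field_simp
  linear_combination -hs

theorem exists_pos_mul_root_sub_eq_neg_mul_sq_add_mul_sub {a b c D y : ℝ} (ha : 0 < a)
    (hb : 0 < b) (hc : c < 0) (hD : 0 < D) (hy : 0 < y) :
    ∃ k > 0, -a * b ^ 2 * y ^ 2 + 2 * b * D * y - c * D =
      k * ((D + √(D ^ 2 - a * c * D)) / (b * a) - y) := by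
  have hrad : 0 ≤ D ^ 2 - a * c * D := by nlinarith [mul_pos ha hD]
  have hDs : D < √(D ^ 2 - a * c * D) := (Real.lt_sqrt hD.le).2 (by nlinarith [mul_pos ha hD])
  have hlin : 0 < a * b * y := by positivity
  refine ⟨b * (a * b * y - D + √(D ^ 2 - a * c * D)), mul_pos hb (by linarith), ?_⟩
  rw [neg_mul_sq_add_mul_sub_eq_mul_sub_mul ha.ne' hb.ne' (Real.sq_sqrt hrad)]
  ring

theorem isMaxOn_Ioi_of_deriv_pos_of_deriv_neg {f : ℝ → ℝ} {a x₀ : ℝ} (hx₀ : a < x₀)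
    (hf : ContinuousOn f (Ioi a)) (hpos : ∀ x ∈ Ioo a x₀, 0 < deriv f x)
    (hneg : ∀ x ∈ Ioi x₀, deriv f x < 0) : IsMaxOn f (Ioi a) x₀ := by
  intro y (hy : a < y)
  rcases le_total y x₀ with hyx | hxy
  · have hmono : StrictMonoOn f (Ioc a x₀) :=
      strictMonoOn_of_deriv_pos (convex_Ioc a x₀) (hf.mono Ioc_subset_Ioi_self)
        (by rwa [interior_Ioc])
    exact hmono.monotoneOn ⟨hy, hyx⟩ ⟨hx₀, le_rfl⟩ hyx
  · have hanti : StrictAntiOn f (Ici x₀) :=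
      strictAntiOn_of_deriv_neg (convex_Ici x₀) (hf.mono (Ici_subset_Ioi.2 hx₀))
        (by rwa [interior_Ici])
    exact hanti.antitoneOn (mem_Ici.2 le_rfl) hxy hxy

theorem turing_threshold_maximizer_general
    (r11 r12 r21 r22 d2 : ℝ)
    (h11 : 0 < r11) (h22 : r22 < 0)
    (D : ℝ) (hD : D = r11 * r22 - r12 * r21) (hDpos : 0 < D)
    (hd2 : 0 < d2)
    (f : ℝ → ℝ) (hf : f = fun y => (d2 * r11 * y - D) / (y * (d2 * y - r22)))
    (ystar : ℝ)
    (hy : ystar = (D + Real.sqrt (-r12 * r21 * D)) / (d2 * r11)) :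
    (∀ y : ℝ, 0 < y → deriv f y =
      (-r11 * d2 ^ 2 * y ^ 2 + 2 * d2 * D * y - r22 * D) / (y ^ 2 * (d2 * y - r22) ^ 2)) ∧
    deriv f ystar = 0 ∧
    (∀ y : ℝ, 0 < y → y < ystar → 0 < deriv f y) ∧
    (∀ y : ℝ, ystar < y → deriv f y < 0) ∧
    (∀ y : ℝ, 0 < y → f y ≤ f ystar) := by
  rw [show -r12 * r21 * D = D ^ 2 - r11 * r22 * D by rw [hD]; ring] at hy
  have hystar : 0 < ystar := by rw [hy]; positivity
  have hderiv (y : ℝ) (hy0 : 0 < y) : HasDerivAt f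
      ((-r11 * d2 ^ 2 * y ^ 2 + 2 * d2 * D * y - r22 * D) / (y ^ 2 * (d2 * y - r22) ^ 2)) y := by
    subst hf
    exact hasDerivAt_linear_div_quadratic r11 d2 r22 D hy0.ne' (by nlinarith)
  have hsign (y : ℝ) (hy0 : 0 < y) : ∃ c > 0, deriv f y = c * (ystar - y) := by
    obtain ⟨k, hk, hnum⟩ :=
      exists_pos_mul_root_sub_eq_neg_mul_sq_add_mul_sub h11 hd2 h22 hDpos hy0
    have : 0 < d2 * y - r22 := by nlinarith
    refine ⟨k / (y ^ 2 * (d2 * y - r22) ^ 2), by positivity, ?_⟩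
    rw [(hderiv y hy0).deriv, hnum, hy]
    ring
  have hpos (y : ℝ) (hy0 : 0 < y) (hlt : y < ystar) : 0 < deriv f y := by
    obtain ⟨c, hc, hc'⟩ := hsign y hy0
    exact hc' ▸ mul_pos hc (sub_pos.2 hlt)
  have hneg (y : ℝ) (hlt : ystar < y) : deriv f y < 0 := by
    obtain ⟨c, hc, hc'⟩ := hsign y (hystar.trans hlt)
    exact hc' ▸ mul_neg_of_pos_of_neg hc (sub_neg.2 hlt)
  refine ⟨fun y hy0 => (hderiv y hy0).deriv, ?_, hpos, hneg, fun y hy0 => ?_⟩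
  · obtain ⟨c, -, hc⟩ := hsign ystar hystar
    simp [hc]
  · exact isMaxOn_Ioi_of_deriv_pos_of_deriv_neg hystar
      (fun x hx => (hderiv x hx).continuousAt.continuousWithinAt)
      (fun x hx => hpos x hx.1 hx.2) hneg (mem_Ioi.2 hy0)

theorem turing_threshold_maximizer
    (r11 r12 r21 r22 d2 : ℝ)
    (h11 : 0 < r11) (h22 : r22 < 0) (h12 : 0 < r12) (h21 : r21 < 0)
    (D : ℝ) (hD : D = r11 * r22 - r12 * r21) (hDpos : 0 < D)
    (hd2 : 0 < d2)
    (f : ℝ → ℝ) (hf : f = fun y => (d2 * r11 * y - D) / (y * (d2 * y - r22)))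
    (ystar : ℝ)
    (hy : ystar = (D + Real.sqrt (-r12 * r21 * D)) / (d2 * r11)) :
    (∀ y : ℝ, 0 < y → deriv f y =
      (-r11 * d2 ^ 2 * y ^ 2 + 2 * d2 * D * y - r22 * D) / (y ^ 2 * (d2 * y - r22) ^ 2)) ∧
    deriv f ystar = 0 ∧
    (∀ y : ℝ, 0 < y → y < ystar → 0 < deriv f y) ∧
    (∀ y : ℝ, ystar < y → deriv f y < 0) ∧
    (∀ y : ℝ, 0 < y → f y ≤ f ystar) :=
  turing_threshold_maximizer_general r11 r12 r21 r22 d2 h11 h22 D hD hDpos hd2 f hf ystar hy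
end
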